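/- arXiv:2107.03789 — 2 statements merged into one kernel-verified Lean document; each statement's English description precedes it below -/
import Mathlib

section
/- Let U be uniformly distributed on (0,1), and for a parameter b ∈ [1,2] define Q_b = (2-b)/4 + (b/2)·U, which is uniform on [1/2 - b/4, 1/2 + b/4]. Then for every strictly increasing differentiable (in particular continuous) function G : [0,1] → ℝ, the variance of G(Q_2) strictly exceeds the variance of G(Q_1); i.e., Var(G(U)) > Var(G(1/4 + U/2)). -/
open MeasureTheory Set intervalIntegral

/-!
Split `[0, 1]` into `[0, 1/4]`, `J = [1/4, 3/4]` and `[3/4, 1]`, and let `x`, `m`, `z` be the means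
of `G` on the three pieces and `g₁ = G (1/4)`, `g₃ = G (3/4)`; strict monotonicity gives
`x < g₁ < m < g₃ < z`. `Var(G(Q₁))` is the variance of `G` on `J`, at most `(g₃ - m)(m - g₁)` by
the Bhatia–Davis inequality. By the law of total variance and Cauchy–Schwarz on the outer pieces,
`Var(G(U))` is at least half of it plus the variance of the means `x, m, z` with weights
`1/4, 1/2, 1/4`, and that variance is at least `(m - x)(z - m)/2 > (g₃ - m)(m - g₁)/2`.
Monotone functions are bounded, so every integral involved exists.
-/

section

variable {f : ℝ → ℝ} {a b : ℝ}

theorem MonotoneOn.intervalIntegrable_of_le (hf : MonotoneOn f (Icc a b)) (hab : a ≤ b) :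
    IntervalIntegrable f volume a b :=
  MonotoneOn.intervalIntegrable (by rwa [uIcc_of_le hab])

theorem MonotoneOn.intervalIntegrable_sq (hf : MonotoneOn f (Icc a b)) (hab : a ≤ b) :
    IntervalIntegrable (fun x => f x ^ 2) volume a b := by
  have hfi := hf.intervalIntegrable_of_le hab
  rw [intervalIntegrable_iff_integrableOn_Ioc_of_le hab] at hfi ⊢
  simp only [sq]
  refine hfi.mul_bdd (c := |f a| + |f b|) hfi.aestronglyMeasurable ?_
  rw [ae_restrict_iff' measurableSet_Ioc]
  refine Filter.Eventually.of_forall fun x hx => ?_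
  have hx' : x ∈ Icc a b := Ioc_subset_Icc_self hx
  have hlo := hf (left_mem_Icc.2 hab) hx' hx'.1
  have hhi := hf hx' (right_mem_Icc.2 hab) hx'.2
  rw [Real.norm_eq_abs, abs_le]
  constructor <;> cases abs_cases (f a) <;> cases abs_cases (f b) <;> linarith

theorem integral_quadratic (hf : IntervalIntegrable f volume a b)
    (hf2 : IntervalIntegrable (fun x => f x ^ 2) volume a b) (α β γ : ℝ) :
    ∫ x in a..b, (α * f x ^ 2 + β * f x + γ)
      = α * (∫ x in a..b, f x ^ 2) + β * (∫ x in a..b, f x) + (b - a) * γ := by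
  rw [integral_add ((hf2.const_mul α).add (hf.const_mul β)) intervalIntegrable_const,
    integral_add (hf2.const_mul α) (hf.const_mul β), intervalIntegral.integral_const_mul,
    intervalIntegral.integral_const_mul, intervalIntegral.integral_const, smul_eq_mul]

theorem sq_integral_le_mul_integral_sq (hab : a ≤ b) (hf : IntervalIntegrable f volume a b)
    (hf2 : IntervalIntegrable (fun x => f x ^ 2) volume a b) :
    (∫ x in a..b, f x) ^ 2 ≤ (b - a) * ∫ x in a..b, f x ^ 2 := by
  rcases hab.eq_or_lt with rfl | hlt
  · simp
  set c := (∫ x in a..b, f x) / (b - a)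
  have hc : (b - a) * c = ∫ x in a..b, f x := mul_div_cancel₀ _ (sub_pos.2 hlt).ne'
  have hvar : 0 ≤ ∫ x in a..b, (1 * f x ^ 2 + (-2 * c) * f x + c ^ 2) := by
    refine integral_nonneg hab fun x _ => ?_
    nlinarith [sq_nonneg (f x - c)]
  rw [integral_quadratic hf hf2] at hvar
  nlinarith [sub_pos.2 hlt]

theorem integral_sq_le_of_mapsTo_Icc (hab : a ≤ b) (hf : IntervalIntegrable f volume a b)
    (hf2 : IntervalIntegrable (fun x => f x ^ 2) volume a b) {m M : ℝ}
    (hmaps : MapsTo f (Icc a b) (Icc m M)) :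
    ∫ x in a..b, f x ^ 2 ≤ (m + M) * (∫ x in a..b, f x) - (b - a) * (m * M) := by
  have h : 0 ≤ ∫ x in a..b, ((-1) * f x ^ 2 + (m + M) * f x + -(m * M)) := by
    refine integral_nonneg hab fun x hx => ?_
    nlinarith [(hmaps hx).1, (hmaps hx).2]
  rw [integral_quadratic hf hf2] at h
  linarith

theorem StrictMonoOn.mul_apply_left_lt_integral (hf : StrictMonoOn f (Icc a b)) (hab : a < b) :
    (b - a) * f a < ∫ x in a..b, f x := by
  have hfi := hf.monotoneOn.intervalIntegrable_of_le hab.le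
  have hpos : 0 < ∫ x in a..b, (f x - f a) :=
    intervalIntegral_pos_of_pos_on (hfi.sub intervalIntegrable_const)
      (fun x hx => sub_pos.2 (hf (left_mem_Icc.2 hab.le) (Ioo_subset_Icc_self hx) hx.1)) hab
  rw [integral_sub hfi intervalIntegrable_const, intervalIntegral.integral_const, smul_eq_mul]
    at hpos
  linarith

theorem StrictMonoOn.integral_lt_mul_apply_right (hf : StrictMonoOn f (Icc a b)) (hab : a < b) :
    ∫ x in a..b, f x < (b - a) * f b := by
  have hfi := hf.monotoneOn.intervalIntegrable_of_le hab.le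
  have hpos : 0 < ∫ x in a..b, (f b - f x) :=
    intervalIntegral_pos_of_pos_on (intervalIntegrable_const.sub hfi)
      (fun x hx => sub_pos.2 (hf (Ioo_subset_Icc_self hx) (right_mem_Icc.2 hab.le) hx.2)) hab
  rw [integral_sub intervalIntegrable_const hfi, intervalIntegral.integral_const, smul_eq_mul]
    at hpos
  linarith

end

/-- With `x = 4p`, `m = 2q`, `z = 4r` the means on the pieces, the gap is at least
`3 (d₁ - d₃)² / 16 + (d₁ d₃ - (g₃ - m)(m - g₁)) / 2` where `d₁ = m - x`, `d₃ = z - m`. -/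
theorem three_piece_variance_lt {p q r B₁ B₂ B₃ g₁ g₃ : ℝ}
    (hB₁ : 4 * p ^ 2 ≤ B₁) (hB₃ : 4 * r ^ 2 ≤ B₃) (hB₂ : B₂ ≤ (g₁ + g₃) * q - g₁ * g₃ / 2)
    (hp : 4 * p < g₁) (hq₁ : g₁ < 2 * q) (hq₃ : 2 * q < g₃) (hr : g₃ < 4 * r) :
    2 * B₂ - (2 * q) ^ 2 < B₁ + B₂ + B₃ - (p + q + r) ^ 2 := by
  nlinarith [sq_nonneg (2 * q - 4 * p - (4 * r - 2 * q)), mul_pos (sub_pos.2 hp) (sub_pos.2 hr),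
    mul_pos (sub_pos.2 hr) (sub_pos.2 hq₁), mul_pos (sub_pos.2 hp) (sub_pos.2 hq₃)]

theorem stmt4_general (G : ℝ → ℝ)
    (hGmono : StrictMonoOn G (Icc (0 : ℝ) 1)) :
    (∫ u in (0:ℝ)..1, (G u) ^ 2) - (∫ u in (0:ℝ)..1, G u) ^ 2 >
      (∫ u in (0:ℝ)..1, (G (1/4 + u/2)) ^ 2) - (∫ u in (0:ℝ)..1, G (1/4 + u/2)) ^ 2 := by
  have h₁ : StrictMonoOn G (Icc 0 (1/4)) := hGmono.mono (Icc_subset_Icc le_rfl (by norm_num))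
  have h₂ : StrictMonoOn G (Icc (1/4) (3/4)) :=
    hGmono.mono (Icc_subset_Icc (by norm_num) (by norm_num))
  have h₃ : StrictMonoOn G (Icc (3/4) 1) := hGmono.mono (Icc_subset_Icc (by norm_num) le_rfl)
  have hI₁ := h₁.monotoneOn.intervalIntegrable_of_le (by norm_num)
  have hI₂ := h₂.monotoneOn.intervalIntegrable_of_le (by norm_num)
  have hI₃ := h₃.monotoneOn.intervalIntegrable_of_le (by norm_num)
  have hI₁' := h₁.monotoneOn.intervalIntegrable_sq (by norm_num)
  have hI₂' := h₂.monotoneOn.intervalIntegrable_sq (by norm_num)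
  have hI₃' := h₃.monotoneOn.intervalIntegrable_sq (by norm_num)
  rw [integral_comp_add_div G two_ne_zero, integral_comp_add_div (fun x => G x ^ 2) two_ne_zero,
    ← integral_add_adjacent_intervals hI₁ (hI₂.trans hI₃), ← integral_add_adjacent_intervals hI₂ hI₃,
    ← integral_add_adjacent_intervals hI₁' (hI₂'.trans hI₃'),
    ← integral_add_adjacent_intervals hI₂' hI₃']
  norm_num [← add_assoc]
  exact three_piece_variance_lt (g₁ := G (1/4)) (g₃ := G (3/4))
    (by linarith [sq_integral_le_mul_integral_sq (by norm_num) hI₁ hI₁'])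
    (by linarith [sq_integral_le_mul_integral_sq (by norm_num) hI₃ hI₃'])
    (by linarith [integral_sq_le_of_mapsTo_Icc (by norm_num) hI₂ hI₂' h₂.monotoneOn.mapsTo_Icc])
    (by linarith [h₁.integral_lt_mul_apply_right (by norm_num)])
    (by linarith [h₂.mul_apply_left_lt_integral (by norm_num)])
    (by linarith [h₂.integral_lt_mul_apply_right (by norm_num)])
    (by linarith [h₃.mul_apply_left_lt_integral (by norm_num)])

/-- For `U` uniform on `(0,1)`, `Q₁ = 1/4 + U/2` and `Q₂ = U`: for any differentiable,
strictly increasing (non-constant) `G` on `[0,1]`, `Var(G(Q₂)) > Var(G(Q₁))`. -/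
theorem stmt4 (G : ℝ → ℝ)
    (hGdiff : DifferentiableOn ℝ G (Icc (0 : ℝ) 1))
    (hGmono : StrictMonoOn G (Icc (0 : ℝ) 1)) :
    (∫ u in (0:ℝ)..1, (G u) ^ 2) - (∫ u in (0:ℝ)..1, G u) ^ 2 >
      (∫ u in (0:ℝ)..1, (G (1/4 + u/2)) ^ 2) - (∫ u in (0:ℝ)..1, G (1/4 + u/2)) ^ 2 :=
  stmt4_general G hGmono
end

section
/- Let Q_b = (2-b)/4 + (b/2)U with U uniform on (0,1), and let G : [0,1] → ℝ be differentiable and strictly increasing. Define V(b) = Var(G(Q_b)). Then for all b ∈ (1,2), dV/db = [ ((G₊² + G₋²)/2 - ((G₊+G₋)/2)²) - V(b) + (E[G(Q_b)] - (G₊+G₋)/2)² ] / b, where G_± = G(1/2 ± b/4), and this derivative is strictly positive. -/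
/-!
Writing `E[h(Q_b)] = (2/b) ∫_{1/2-b/4}^{1/2+b/4} h`, the fundamental theorem of calculus gives
`d/db E[h(Q_b)] = ((h₊ + h₋)/2 - E[h(Q_b)]) / b`; applied to `h = G` and `h = G²` this yields the
formula for `V'(b)`. Its numerator is `r² - E[(G(Q_b) - m)²]`, where `m` and `r` are the midpoint
and half-width of `[G₋, G₊]`. Since `G(Q_b)` takes values in `[G₋, G₊]` and is strictly inside at
`Q_b = 1/2`, continuity makes this second moment strictly smaller than `r²`.
-/

open MeasureTheory Set intervalIntegral

theorem hasDerivAt_integral_of_hasDerivAt_bounds {h : ℝ → ℝ} {a b : ℝ}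
    (hc : ContinuousOn h (Ioo a b)) {lo hi : ℝ → ℝ} {lo' hi' t : ℝ}
    (hlo : HasDerivAt lo lo' t) (hhi : HasDerivAt hi hi' t)
    (hlo_mem : lo t ∈ Ioo a b) (hhi_mem : hi t ∈ Ioo a b) :
    HasDerivAt (fun t => ∫ x in lo t..hi t, h x) (h (hi t) * hi' - h (lo t) * lo') t := by
  have hint : ∀ y ∈ Ioo a b, ∀ z ∈ Ioo a b, IntervalIntegrable h volume y z := fun y hy z hz =>
    (hc.mono (ordConnected_Ioo.uIcc_subset hy hz)).intervalIntegrable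
  set F : ℝ → ℝ := fun y => ∫ x in lo t..y, h x
  have hF : ∀ y ∈ Ioo a b, HasDerivAt F (h y) y := fun y hy =>
    integral_hasDerivAt_right (hint _ hlo_mem _ hy)
      (hc.stronglyMeasurableAtFilter isOpen_Ioo y hy) (hc.continuousAt (isOpen_Ioo.mem_nhds hy))
  have hev : (fun t => F (hi t) - F (lo t)) =ᶠ[nhds t] fun t => ∫ x in lo t..hi t, h x := by
    filter_upwards [hlo.continuousAt.preimage_mem_nhds (isOpen_Ioo.mem_nhds hlo_mem),
      hhi.continuousAt.preimage_mem_nhds (isOpen_Ioo.mem_nhds hhi_mem)] with s hs_lo hs_hi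
    exact integral_interval_sub_left (hint _ hlo_mem _ hs_hi) (hint _ hlo_mem _ hs_lo)
  exact (((hF _ hhi_mem).comp t hhi).sub ((hF _ hlo_mem).comp t hlo)).congr_of_eventuallyEq hev.symm

/-- `qMean h b` is `E[h(Q_b)]`. -/
noncomputable def qMean (h : ℝ → ℝ) (b : ℝ) : ℝ :=
  ∫ u in (0:ℝ)..1, h ((2 - b)/4 + (b/2) * u)

theorem qMean_eq (h : ℝ → ℝ) {b : ℝ} (hb : b ≠ 0) :
    qMean h b = 2 / b * ∫ x in (1/2 - b/4)..(1/2 + b/4), h x := by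
  have haffine : ∀ u : ℝ, (2 - b)/4 + (b/2) * u = (b/2) * u + (2 - b)/4 := fun u => by ring
  rw [qMean, funext fun u => congrArg h (haffine u), integral_comp_mul_add h (by positivity),
    smul_eq_mul, inv_div]
  congr 2 <;> ring

theorem hasDerivAt_qMean {h : ℝ → ℝ} (hc : ContinuousOn h (Ioo 0 1)) {b : ℝ} (hb : b ∈ Ioo 0 2) :
    HasDerivAt (qMean h) (((h (1/2 + b/4) + h (1/2 - b/4)) / 2 - qMean h b) / b) b := by
  obtain ⟨hb0, hb2⟩ := hb
  have hlo : HasDerivAt (fun b : ℝ => 1/2 - b/4) (-(1/4)) b := by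
    simpa using ((hasDerivAt_id b).div_const 4).const_sub (1/2 : ℝ)
  have hhi : HasDerivAt (fun b : ℝ => 1/2 + b/4) (1/4) b := by
    simpa using ((hasDerivAt_id b).div_const 4).const_add (1/2 : ℝ)
  have hI := hasDerivAt_integral_of_hasDerivAt_bounds hc hlo hhi
    ⟨by linarith, by linarith⟩ ⟨by linarith, by linarith⟩
  have hev : (fun b => 2 / b * ∫ x in (1/2 - b/4)..(1/2 + b/4), h x) =ᶠ[nhds b] qMean h := by
    filter_upwards [lt_mem_nhds hb0] with s hs
    exact (qMean_eq h hs.ne').symm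
  refine ((((hasDerivAt_inv hb0.ne').const_mul 2).mul hI).congr_of_eventuallyEq hev.symm)
    |>.congr_deriv ?_
  rw [qMean_eq h hb0.ne']
  field_simp
  ring

theorem hasDerivAt_qMean_sq_sub_sq_qMean {G : ℝ → ℝ} (hc : ContinuousOn G (Ioo 0 1)) {b : ℝ}
    (hb : b ∈ Ioo 0 2) :
    HasDerivAt (fun b => qMean (fun x => G x ^ 2) b - qMean G b ^ 2)
      (((G (1/2 + b/4) ^ 2 + G (1/2 - b/4) ^ 2) / 2 - ((G (1/2 + b/4) + G (1/2 - b/4)) / 2) ^ 2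
        - (qMean (fun x => G x ^ 2) b - qMean G b ^ 2)
        + (qMean G b - (G (1/2 + b/4) + G (1/2 - b/4)) / 2) ^ 2) / b) b := by
  have hsq := hasDerivAt_qMean (h := fun x => G x ^ 2) (hc.pow 2) hb
  refine (hsq.sub ((hasDerivAt_qMean hc hb).pow 2)).congr_deriv ?_
  have hb0 : b ≠ 0 := hb.1.ne'
  field_simp
  ring

theorem integral_sq_sub_eq_variance_add_sq {f : ℝ → ℝ} (hf : IntervalIntegrable f volume 0 1)
    (hf2 : IntervalIntegrable (fun u => f u ^ 2) volume 0 1) (c : ℝ) :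
    ∫ u in (0:ℝ)..1, (f u - c) ^ 2
      = (∫ u in (0:ℝ)..1, f u ^ 2) - (∫ u in (0:ℝ)..1, f u) ^ 2
        + ((∫ u in (0:ℝ)..1, f u) - c) ^ 2 := by
  have hexpand : ∀ u, (f u - c) ^ 2 = f u ^ 2 - 2 * c * f u + c ^ 2 := fun u => by ring
  simp only [hexpand]
  rw [integral_add (hf2.sub (hf.const_mul _)) intervalIntegrable_const,
    integral_sub hf2 (hf.const_mul _), intervalIntegral.integral_const_mul,
    intervalIntegral.integral_const]
  simp only [sub_zero, smul_eq_mul, one_mul]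
  ring

theorem integral_sq_sub_midpoint_lt {f : ℝ → ℝ} {lo hi : ℝ} (hf : ContinuousOn f (Icc 0 1))
    (hbound : ∀ u ∈ Icc (0:ℝ) 1, f u ∈ Icc lo hi) {u₀ : ℝ} (hu₀ : u₀ ∈ Icc (0:ℝ) 1)
    (hinner : f u₀ ∈ Ioo lo hi) :
    ∫ u in (0:ℝ)..1, (f u - (hi + lo) / 2) ^ 2 < ((hi - lo) / 2) ^ 2 := by
  calc ∫ u in (0:ℝ)..1, (f u - (hi + lo) / 2) ^ 2
      < ∫ _ in (0:ℝ)..1, ((hi - lo) / 2) ^ 2 := by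
        refine integral_lt_integral_of_continuousOn_of_le_of_exists_lt one_pos
          ((hf.sub continuousOn_const).pow 2) continuousOn_const (fun u hu => ?_) ⟨u₀, hu₀, ?_⟩
        · obtain ⟨h1, h2⟩ := hbound u (Ioc_subset_Icc_self hu)
          nlinarith
        · obtain ⟨h1, h2⟩ := hinner
          nlinarith
    _ = ((hi - lo) / 2) ^ 2 := by simp

theorem twoPointVariance_sub_variance_add_sq_pos {f : ℝ → ℝ} {lo hi : ℝ}
    (hf : ContinuousOn f (Icc 0 1))
    (hbound : ∀ u ∈ Icc (0:ℝ) 1, f u ∈ Icc lo hi) {u₀ : ℝ} (hu₀ : u₀ ∈ Icc (0:ℝ) 1)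
    (hinner : f u₀ ∈ Ioo lo hi) :
    0 < (hi ^ 2 + lo ^ 2) / 2 - ((hi + lo) / 2) ^ 2
      - ((∫ u in (0:ℝ)..1, f u ^ 2) - (∫ u in (0:ℝ)..1, f u) ^ 2)
      + ((∫ u in (0:ℝ)..1, f u) - (hi + lo) / 2) ^ 2 := by
  have hint : IntervalIntegrable f volume 0 1 := hf.intervalIntegrable_of_Icc zero_le_one
  have hint2 : IntervalIntegrable (fun u => f u ^ 2) volume 0 1 :=
    (hf.pow 2).intervalIntegrable_of_Icc zero_le_one
  have hlt := integral_sq_sub_midpoint_lt hf hbound hu₀ hinner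
  rw [integral_sq_sub_eq_variance_add_sq hint hint2] at hlt
  nlinarith

theorem affine_mem_Icc {b u : ℝ} (hb : 0 ≤ b) (hu : u ∈ Icc (0:ℝ) 1) :
    (2 - b)/4 + (b/2) * u ∈ Icc (1/2 - b/4) (1/2 + b/4) := by
  obtain ⟨hu0, hu1⟩ := hu
  constructor <;> nlinarith

theorem Icc_half_sub_quarter_subset {b : ℝ} (hb : b ≤ 2) :
    Icc (1/2 - b/4) (1/2 + b/4) ⊆ Icc 0 1 := fun _ hx => ⟨by linarith [hx.1], by linarith [hx.2]⟩

theorem comp_affine_mem_Icc {G : ℝ → ℝ} (hG : MonotoneOn G (Icc 0 1)) {b u : ℝ} (hb0 : 0 ≤ b)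
    (hb2 : b ≤ 2) (hu : u ∈ Icc (0:ℝ) 1) :
    G ((2 - b)/4 + (b/2) * u) ∈ Icc (G (1/2 - b/4)) (G (1/2 + b/4)) := by
  have hsub := Icc_half_sub_quarter_subset hb2
  have hQ := affine_mem_Icc hb0 hu
  have hne : 1/2 - b/4 ≤ 1/2 + b/4 := by linarith
  exact ⟨hG (hsub (left_mem_Icc.2 hne)) (hsub hQ) hQ.1,
    hG (hsub hQ) (hsub (right_mem_Icc.2 hne)) hQ.2⟩

/-- For `U` uniform on `(0,1)` and `Q_b = (2-b)/4 + (b/2)U`, and `G` differentiable strictly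
increasing, the variance `V(b) = Var(G(Q_b))` satisfies, for `b ∈ (1,2)`,
`V'(b) = [((G₊²+G₋²)/2 − ((G₊+G₋)/2)²) − V(b) + (E[G(Q_b)] − (G₊+G₋)/2)²]/b` with
`G₊ = G(1/2 + b/4)`, `G₋ = G(1/2 − b/4)`, and this derivative is strictly positive. -/
theorem stmt5 (G : ℝ → ℝ)
    (hGdiff : DifferentiableOn ℝ G (Icc (0 : ℝ) 1))
    (hGmono : StrictMonoOn G (Icc (0 : ℝ) 1))
    (V M : ℝ → ℝ)
    (hV : ∀ b, V b = (∫ u in (0:ℝ)..1, (G ((2 - b)/4 + (b/2) * u)) ^ 2)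
                      - (∫ u in (0:ℝ)..1, G ((2 - b)/4 + (b/2) * u)) ^ 2)
    (hM : ∀ b, M b = ∫ u in (0:ℝ)..1, G ((2 - b)/4 + (b/2) * u)) :
    ∀ b ∈ Ioo (1 : ℝ) 2,
      HasDerivAt V
        ((((G (1/2 + b/4)) ^ 2 + (G (1/2 - b/4)) ^ 2) / 2
            - ((G (1/2 + b/4) + G (1/2 - b/4)) / 2) ^ 2
          - V b
          + (M b - (G (1/2 + b/4) + G (1/2 - b/4)) / 2) ^ 2) / b) b
      ∧ 0 < (((G (1/2 + b/4)) ^ 2 + (G (1/2 - b/4)) ^ 2) / 2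
            - ((G (1/2 + b/4) + G (1/2 - b/4)) / 2) ^ 2
          - V b
          + (M b - (G (1/2 + b/4) + G (1/2 - b/4)) / 2) ^ 2) / b := by
  rintro b ⟨hb1, hb2⟩
  have hb0 : 0 < b := one_pos.trans hb1
  have hVq : V = fun b => qMean (fun x => G x ^ 2) b - qMean G b ^ 2 := funext hV
  have hMq : M = qMean G := funext hM
  have hGc := hGdiff.continuousOn
  refine ⟨hVq ▸ hMq ▸ hasDerivAt_qMean_sq_sub_sq_qMean (hGc.mono Ioo_subset_Icc_self) ⟨hb0, hb2⟩,
    div_pos ?_ hb0⟩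
  have hsub := Icc_half_sub_quarter_subset hb2.le
  have hmid : G ((2 - b)/4 + (b/2) * (1/2)) ∈ Ioo (G (1/2 - b/4)) (G (1/2 + b/4)) := by
    rw [show (2 - b)/4 + (b/2) * (1/2) = 1/2 by ring]
    exact ⟨hGmono (hsub (left_mem_Icc.2 (by linarith))) ⟨by linarith, by linarith⟩ (by linarith),
      hGmono ⟨by linarith, by linarith⟩ (hsub (right_mem_Icc.2 (by linarith))) (by linarith)⟩
  rw [hV, hM]
  have hGQc : ContinuousOn (fun u => G ((2 - b)/4 + (b/2) * u)) (Icc 0 1) :=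
    hGc.comp (by fun_prop) fun u hu => hsub (affine_mem_Icc hb0.le hu)
  exact twoPointVariance_sub_variance_add_sq_pos hGQc
    (fun u hu => comp_affine_mem_Icc hGmono.monotoneOn hb0.le hb2.le hu)
    ⟨by norm_num, by norm_num⟩ hmid
end
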